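/- Let ℂ : Sym₃ → Sym₃ be an elasticity tensor that is coercive with constant c > 0 satisfying the triclinic symmetry ℂ_{αβγ3} = 0 for all α,β,γ ∈ {1,2} and ℂ_{α333} = 0 for α ∈ {1,2}. Let Z̄ ∈ Sym₂ and let G ∈ ℝ³ with G₁ = G₂ = 0. Then the unique z ∈ ℝ³ with (ℂ(Z̄ + z⊙e₃))_{i3} = G_i for i = 1,2,3 satisfies z₁ = z₂ = 0; consequently the shear components (ℂ(Z̄ + z⊙e₃))_{13} and (ℂ(Z̄ + z⊙e₃))_{23} vanish. -/
import Mathlib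

open Matrix
open scoped BigOperators

noncomputable section

/-- The space of real 3×3 matrices; symmetric ones form `Sym₃`. -/
abbrev M3 : Type := Matrix (Fin 3) (Fin 3) ℝ

/-- The Frobenius pairing `A·B := tr (A*B)`. -/
def dot3 (A B : M3) : ℝ := (A * B).trace

/-- The standard basis vector `e i` of `ℝ³`. -/
def bv (i : Fin 3) : Fin 3 → ℝ := Pi.single i 1

/-- The symmetrized tensor product `a ⊙ b := (1/2)(a⊗b + b⊗a)`. -/
def symOd (a b : Fin 3 → ℝ) : M3 := Matrix.of fun i j => (a i * b j + b i * a j) / 2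

/-- `b ⊙ e₃`. -/
def od3 (b : Fin 3 → ℝ) : M3 := symOd b (bv 2)

/-- Components `ℂ_{ijkl} := ℂ(e_k⊙e_l)·(e_i⊙e_j)` of the elasticity tensor. -/
def Ccomp (C : M3 →ₗ[ℝ] M3) (i j k l : Fin 3) : ℝ :=
  dot3 (C (symOd (bv k) (bv l))) (symOd (bv i) (bv j))

/-- `A` has vanishing third row and column (identification of `Sym₂` inside `Sym₃`). -/
def planar (A : M3) : Prop := ∀ i : Fin 3, A i 2 = 0 ∧ A 2 i = 0

lemma bv_apply (i j : Fin 3) : bv i j = if i = j then 1 else 0 := by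
  simp [bv, Pi.single_apply]
  by_cases h : i = j <;> simp [h, eq_comm]

lemma od3_isSymm (z : Fin 3 → ℝ) : (od3 z).IsSymm := by
  ext i j; simp [od3, symOd, Matrix.transpose_apply]; ring

lemma symOd_isSymm (a b : Fin 3 → ℝ) : (symOd a b).IsSymm := by
  ext i j; simp [symOd, Matrix.transpose_apply]; ring

lemma dot3_pair (S : M3) (hS : S.IsSymm) (w : Fin 3 → ℝ) :
    dot3 S (od3 w) = w 0 * S 0 2 + w 1 * S 1 2 + w 2 * S 2 2 := by
  have h20 := hS.apply 0 2
  have h21 := hS.apply 1 2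
  simp [dot3, Matrix.trace, Matrix.diag, Matrix.mul_apply, od3, symOd, bv_apply,
    Fin.sum_univ_three]
  linear_combination (w 0 / 2) * h20 + (w 1 / 2) * h21

lemma dot3_self_od3 (w : Fin 3 → ℝ) :
    dot3 (od3 w) (od3 w) = (w 0 ^ 2 + w 1 ^ 2) / 2 + w 2 ^ 2 := by
  simp [dot3, Matrix.trace, Matrix.diag, Matrix.mul_apply, od3, symOd, bv_apply,
    Fin.sum_univ_three]
  ring

lemma dot3_entry (S : M3) (hS : S.IsSymm) (i j : Fin 3) :
    dot3 S (symOd (bv i) (bv j)) = S i j := by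
  fin_cases i <;> fin_cases j <;>
    simp [dot3, Matrix.trace, Matrix.diag, Matrix.mul_apply, symOd, bv_apply,
      Fin.sum_univ_three] <;> linarith [hS.apply 0 1, hS.apply 0 2, hS.apply 1 2]

lemma od3_add (z w : Fin 3 → ℝ) : od3 (z + w) = od3 z + od3 w := by
  ext i j; simp [od3, symOd]; ring

lemma od3_smul (a : ℝ) (z : Fin 3 → ℝ) : od3 (a • z) = a • od3 z := by
  ext i j; simp [od3, symOd]; ring

lemma dot3_add_left (A B X : M3) : dot3 (A + B) X = dot3 A X + dot3 B X := by
  simp [dot3, add_mul]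

lemma dot3_comm (A B : M3) : dot3 A B = dot3 B A := Matrix.trace_mul_comm A B

/-- Let `ℂ` be an elasticity tensor, coercive with constant `c > 0`,
satisfying the triclinic symmetry `ℂ_{αβγ3} = 0` and `ℂ_{α333} = 0` for Greek indices.
Let `Z̄ ∈ Sym₂` and `G ∈ ℝ³` with `G₁ = G₂ = 0`.  Then the unique `z ∈ ℝ³` with
`(ℂ(Z̄ + z⊙e₃))_{i3} = G_i` for `i = 1,2,3` satisfies `z₁ = z₂ = 0`; consequently the
shear components `(ℂ(Z̄ + z⊙e₃))_{13}` and `(ℂ(Z̄ + z⊙e₃))_{23}` vanish. -/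
theorem triclinic_no_shear
    (C : M3 →ₗ[ℝ] M3) (c : ℝ) (hc : 0 < c)
    (hCsymm : ∀ A : M3, A.IsSymm → (C A).IsSymm)
    (hCsa : ∀ A B : M3, A.IsSymm → B.IsSymm → dot3 (C A) B = dot3 A (C B))
    (hCcoer : ∀ A : M3, A.IsSymm → c * dot3 A A ≤ dot3 (C A) A)
    (htri1 : ∀ α β γ : Fin 3, α ≠ 2 → β ≠ 2 → γ ≠ 2 → Ccomp C α β γ 2 = 0)
    (htri2 : ∀ α : Fin 3, α ≠ 2 → Ccomp C α 2 2 2 = 0)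
    (Zb : M3) (hZs : Zb.IsSymm) (hZp : planar Zb)
    (G : Fin 3 → ℝ) (hG1 : G 0 = 0) (hG2 : G 1 = 0) :
    (∃! z : Fin 3 → ℝ, ∀ i : Fin 3, (C (Zb + od3 z)) i 2 = G i)
    ∧ (∀ z : Fin 3 → ℝ, (∀ i : Fin 3, (C (Zb + od3 z)) i 2 = G i) →
        z 0 = 0 ∧ z 1 = 0
        ∧ (C (Zb + od3 z)) 0 2 = 0 ∧ (C (Zb + od3 z)) 1 2 = 0) := by
  have hCZs : (C Zb).IsSymm := hCsymm Zb hZs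
  have hXsym : ∀ k l : Fin 3, (C (symOd (bv k) (bv l))).IsSymm :=
    fun k l => hCsymm _ (symOd_isSymm _ _)
  have hentry : ∀ i j k l : Fin 3, (C (symOd (bv k) (bv l))) i j = Ccomp C i j k l := by
    intro i j k l
    rw [← dot3_entry _ (hXsym k l) i j]; rfl
  -- `(ℂ Z̄)_{α3} = 0` for planar `α`
  have hCZb : ∀ α : Fin 3, α ≠ 2 → (C Zb) α 2 = 0 := by
    intro α hα
    have h1 : (C Zb) α 2 = dot3 Zb (C (symOd (bv α) (bv 2))) := by
      rw [← dot3_entry _ hCZs α 2, hCsa Zb _ hZs (symOd_isSymm _ _)]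
    have hx : ∀ β γ : Fin 3, β ≠ 2 → γ ≠ 2 → (C (symOd (bv α) (bv 2))) β γ = 0 := by
      intro β γ hβ hγ; rw [hentry]; exact htri1 β γ α hβ hγ hα
    rw [h1]
    simp [dot3, Matrix.trace, Matrix.diag, Matrix.mul_apply, Fin.sum_univ_three,
      (hZp 0).1, (hZp 1).1, (hZp 0).2, (hZp 1).2, (hZp 2).1,
      hx 0 0 (by decide) (by decide), hx 0 1 (by decide) (by decide),
      hx 1 0 (by decide) (by decide), hx 1 1 (by decide) (by decide)]
  -- `(ℂ(w⊙e₃))_{33} = 0` for planar `w`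
  have hC22 : ∀ w : Fin 3 → ℝ, w 2 = 0 → (C (od3 w)) 2 2 = 0 := by
    intro w hw2
    have h1 : (C (od3 w)) 2 2 = dot3 (C (symOd (bv 2) (bv 2))) (od3 w) := by
      rw [← dot3_entry _ (hCsymm _ (od3_isSymm w)) 2 2,
        hCsa _ _ (od3_isSymm w) (symOd_isSymm _ _)]
      exact dot3_comm _ _
    rw [h1, dot3_pair _ (hXsym 2 2) w, hentry, hentry, hw2,
      htri2 0 (by decide), htri2 1 (by decide)]
    ring
  -- the linear map `z ↦ ((ℂ(z⊙e₃))_{i3})_i`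
  let L : (Fin 3 → ℝ) →ₗ[ℝ] (Fin 3 → ℝ) :=
    { toFun := fun z i => (C (od3 z)) i 2
      map_add' := by
        intro x y; funext i
        show C (od3 (x + y)) i 2 = C (od3 x) i 2 + C (od3 y) i 2
        rw [od3_add, map_add, Matrix.add_apply]
      map_smul' := by
        intro a x; funext i
        show C (od3 (a • x)) i 2 = a * C (od3 x) i 2
        rw [od3_smul, C.map_smul, Matrix.smul_apply, smul_eq_mul] }
  have hLapp : ∀ z : Fin 3 → ℝ, ∀ i, L z i = (C (od3 z)) i 2 := fun _ _ => rfl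
  have hLinj : Function.Injective L := by
    rw [injective_iff_map_eq_zero]
    intro z hz
    have hzero : dot3 (C (od3 z)) (od3 z) = 0 := by
      rw [dot3_pair _ (hCsymm _ (od3_isSymm z)) z]
      have h0 := congrFun hz 0
      have h1 := congrFun hz 1
      have h2 := congrFun hz 2
      simp only [hLapp, Pi.zero_apply] at h0 h1 h2
      rw [h0, h1, h2]; ring
    have hco := hCcoer (od3 z) (od3_isSymm z)
    rw [hzero, dot3_self_od3] at hco
    have hq : (z 0 ^ 2 + z 1 ^ 2) / 2 + z 2 ^ 2 ≤ 0 := by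
      by_contra h; push_neg at h; nlinarith [mul_pos hc h]
    have h0 : z 0 = 0 := sq_eq_zero_iff.mp (le_antisymm
      (by nlinarith [sq_nonneg (z 1), sq_nonneg (z 2)]) (sq_nonneg _))
    have h1 : z 1 = 0 := sq_eq_zero_iff.mp (le_antisymm
      (by nlinarith [sq_nonneg (z 0), sq_nonneg (z 2)]) (sq_nonneg _))
    have h2 : z 2 = 0 := sq_eq_zero_iff.mp (le_antisymm
      (by nlinarith [sq_nonneg (z 0), sq_nonneg (z 1)]) (sq_nonneg _))
    funext i
    fin_cases i
    · exact h0
    · exact h1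
    · exact h2
  have hLsurj : Function.Surjective L := LinearMap.injective_iff_surjective.mp hLinj
  obtain ⟨z₀, hz₀⟩ := hLsurj (fun i => G i - (C Zb) i 2)
  have hz₀sol : ∀ i : Fin 3, (C (Zb + od3 z₀)) i 2 = G i := by
    intro i
    have := congrFun hz₀ i
    rw [hLapp] at this
    rw [map_add, Matrix.add_apply, this]; ring
  constructor
  · refine ⟨z₀, hz₀sol, ?_⟩
    intro y hy
    apply hLinj
    funext i
    rw [hLapp, hLapp]
    have h1 := hy i
    have h2 := hz₀sol i
    rw [map_add, Matrix.add_apply] at h1 h2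
    linarith
  · intro z hz
    set w : Fin 3 → ℝ := ![z 0, z 1, 0] with hw
    have hw0 : w 0 = z 0 := rfl
    have hw1 : w 1 = z 1 := rfl
    have hw2 : w 2 = 0 := rfl
    have hZods : (Zb + od3 z).IsSymm := hZs.add (od3_isSymm z)
    have hT : dot3 (C (Zb + od3 z)) (od3 w) = 0 := by
      rw [dot3_pair _ (hCsymm _ hZods) w, hz 0, hz 1, hz 2, hG1, hG2, hw2]; ring
    have hsplit : dot3 (C Zb) (od3 w) + dot3 (C (od3 z)) (od3 w) = 0 := by
      rw [← dot3_add_left, ← map_add]; exact hT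
    have h1 : dot3 (C Zb) (od3 w) = 0 := by
      rw [dot3_pair _ hCZs w, hCZb 0 (by decide), hCZb 1 (by decide), hw2]; ring
    have h2 : dot3 (C (od3 z)) (od3 w) = dot3 (C (od3 w)) (od3 w) := by
      rw [hCsa _ _ (od3_isSymm z) (od3_isSymm w), dot3_comm,
        dot3_pair _ (hCsymm _ (od3_isSymm w)) z, dot3_pair _ (hCsymm _ (od3_isSymm w)) w,
        hC22 w hw2, hw0, hw1, hw2]
      ring
    have hzero : dot3 (C (od3 w)) (od3 w) = 0 := by rw [← h2]; linarith
    have hco := hCcoer (od3 w) (od3_isSymm w)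
    rw [hzero, dot3_self_od3, hw0, hw1, hw2] at hco
    have hq : (z 0 ^ 2 + z 1 ^ 2) / 2 + (0 : ℝ) ^ 2 ≤ 0 := by
      by_contra h; push_neg at h; nlinarith [mul_pos hc h]
    have hz0 : z 0 = 0 := sq_eq_zero_iff.mp (le_antisymm
      (by nlinarith [sq_nonneg (z 1)]) (sq_nonneg _))
    have hz1 : z 1 = 0 := sq_eq_zero_iff.mp (le_antisymm
      (by nlinarith [sq_nonneg (z 0)]) (sq_nonneg _))
    refine ⟨hz0, hz1, ?_, ?_⟩
    · rw [hz 0, hG1]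
    · rw [hz 1, hG2]
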